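/- arXiv:math/0610137 — 2 statements merged into one kernel-verified Lean document; each statement's English description precedes it below -/
import Mathlib

section
/- Let A be a weakly amenable Banach algebra such that every closed two-sided ideal of A has a quasi-central bounded approximate identity. Then A is ideally amenable: for every closed two-sided ideal I of A, every continuous derivation A → I* is inner. -/
/-!
Along an ultrafilter finer than the approximate identity `(e i)` of `I`, the ultralimit
`ρ f b = lim f (b * e i)` defines a bounded linear extension `ρ : I* → A*` of functionals, a right
inverse of restriction `A* → I*`. Restriction is a bimodule map, and quasi-centrality of `(e i)`
makes `ρ` one as well. So `I*` is a bimodule retract of `A*`, and a derivation `D : A → I*` is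
inner because `ρ ∘ D` is inner by weak amenability.
-/

open ContinuousLinearMap Filter Topology

namespace Paper

structure Bimod (A : Type*) [NormedRing A] [NormedAlgebra ℂ A]
    (X : Type*) [NormedAddCommGroup X] [NormedSpace ℂ X] where
  l : A → X →L[ℂ] X
  r : A → X →L[ℂ] X
  l_mul : ∀ a b x, l (a * b) x = l a (l b x)
  r_mul : ∀ a b x, r (a * b) x = r b (r a x)
  lr : ∀ a b x, l a (r b x) = r b (l a x)

variable {A : Type*} [NormedRing A] [NormedAlgebra ℂ A]
variable {X : Type*} [NormedAddCommGroup X] [NormedSpace ℂ X]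

noncomputable def Bimod.dual (M : Bimod A X) : Bimod A (X →L[ℂ] ℂ) where
  l a := (compL ℂ X X ℂ).flip (M.r a)
  r a := (compL ℂ X X ℂ).flip (M.l a)
  l_mul a b f := by ext x; simp [M.r_mul]
  r_mul a b f := by ext x; simp [M.l_mul]
  lr a b f := by ext x; simp [M.lr]

def IsDerivation (M : Bimod A X) (D : A →L[ℂ] X) : Prop :=
  ∀ a b, D (a * b) = M.l a (D b) + M.r b (D a)

def IsInner (M : Bimod A X) (D : A →L[ℂ] X) : Prop :=
  ∃ x, ∀ a, D a = M.l a x - M.r a x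

noncomputable def Bimod.restrict (M : Bimod A X) (Y : Submodule ℂ X)
    (hl : ∀ a, ∀ y ∈ Y, M.l a y ∈ Y) (hr : ∀ a, ∀ y ∈ Y, M.r a y ∈ Y) :
    Bimod A Y where
  l a := ((M.l a).comp Y.subtypeL).codRestrict Y fun y => hl a y y.2
  r a := ((M.r a).comp Y.subtypeL).codRestrict Y fun y => hr a y y.2
  l_mul a b y := Subtype.ext (M.l_mul a b y)
  r_mul a b y := Subtype.ext (M.r_mul a b y)
  lr a b y := Subtype.ext (M.lr a b y)

noncomputable def algBimod (A : Type*) [NormedRing A] [NormedAlgebra ℂ A] : Bimod A A where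
  l a := ContinuousLinearMap.mul ℂ A a
  r a := (ContinuousLinearMap.mul ℂ A).flip a
  l_mul a b x := mul_assoc a b x
  r_mul a b x := (mul_assoc x a b).symm
  lr a b x := (mul_assoc a x b).symm

noncomputable def idealBimod (I : Submodule ℂ A)
    (hL : ∀ a, ∀ x ∈ I, a * x ∈ I) (hR : ∀ a, ∀ x ∈ I, x * a ∈ I) :
    Bimod A I where
  l a := ((ContinuousLinearMap.mul ℂ A a).comp I.subtypeL).codRestrict I fun x => hL a x x.2
  r a := (((ContinuousLinearMap.mul ℂ A).flip a).comp I.subtypeL).codRestrict I fun x => hR a x x.2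
  l_mul a b x := Subtype.ext (mul_assoc a b (x : A))
  r_mul a b x := Subtype.ext (mul_assoc (x : A) a b).symm
  lr a b x := Subtype.ext (mul_assoc a (x : A) b).symm

section Ultralimit

variable {ι 𝕜 E F G : Type*} [NontriviallyNormedField 𝕜]
  [SeminormedAddCommGroup E] [NormedSpace 𝕜 E] [SeminormedAddCommGroup F] [NormedSpace 𝕜 F]
  [NormedAddCommGroup G] [NormedSpace 𝕜 G] [ProperSpace G]

theorem exists_tendsto_ultrafilter_of_norm_le (U : Ultrafilter ι) {f : ι → G} {M : ℝ}
    (hf : ∀ i, ‖f i‖ ≤ M) : ∃ c, Tendsto f U (𝓝 c) := by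
  obtain ⟨c, -, hc⟩ := (isCompact_closedBall (0 : G) M).ultrafilter_le_nhds (U.map f)
    (by
      rw [Ultrafilter.coe_map, le_principal_iff]
      exact mem_map.2 (univ_mem' fun i => mem_closedBall_zero_iff.2 (hf i)))
  exact ⟨c, hc⟩

theorem exists_tendsto_ultrafilter_apply₂ (U : Ultrafilter ι) (T : ι → E →L[𝕜] F →L[𝕜] G)
    {M : ℝ} (hT : ∀ i, ‖T i‖ ≤ M) :
    ∃ S : E →L[𝕜] F →L[𝕜] G, ∀ x y, Tendsto (fun i => T i x y) U (𝓝 (S x y)) := by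
  have hbound : ∀ x y i, ‖T i x y‖ ≤ M * ‖x‖ * ‖y‖ := fun x y i =>
    ((T i).le_opNorm₂ x y).trans (by gcongr; exact hT i)
  choose Φ hΦ using fun x y => exists_tendsto_ultrafilter_of_norm_le U (hbound x y)
  have hΦ_eq {x y c} (h : Tendsto (fun i => T i x y) U (𝓝 c)) : Φ x y = c :=
    tendsto_nhds_unique (hΦ x y) h
  let B : E →ₗ[𝕜] F →ₗ[𝕜] G := LinearMap.mk₂ 𝕜 Φ
    (fun x x' y => hΦ_eq (by simpa using (hΦ x y).add (hΦ x' y)))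
    (fun c x y => hΦ_eq (by simpa using (hΦ x y).const_smul c))
    (fun x y y' => hΦ_eq (by simpa using (hΦ x y).add (hΦ x y')))
    (fun c x y => hΦ_eq (by simpa using (hΦ x y).const_smul c))
  exact ⟨B.mkContinuous₂ M fun x y => le_of_tendsto' (hΦ x y).norm (hbound x y), hΦ⟩

end Ultralimit

section Bimodules

variable {Y : Type*} [NormedAddCommGroup Y] [NormedSpace ℂ Y]

structure Bimod.IsHom (M : Bimod A X) (N : Bimod A Y) (T : X →L[ℂ] Y) : Prop where
  map_l : ∀ a x, T (M.l a x) = N.l a (T x)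
  map_r : ∀ a x, T (M.r a x) = N.r a (T x)

variable {M : Bimod A X} {N : Bimod A Y} {T : X →L[ℂ] Y} {D : A →L[ℂ] X}

theorem IsDerivation.comp (hD : IsDerivation M D) (hT : M.IsHom N T) :
    IsDerivation N (T.comp D) := by
  intro a b
  simp [hD a b, hT.map_l, hT.map_r]

theorem IsInner.comp (hD : IsInner M D) (hT : M.IsHom N T) : IsInner N (T.comp D) := by
  obtain ⟨x, hx⟩ := hD
  exact ⟨T x, fun a => by simp [hx, hT.map_l, hT.map_r]⟩

theorem isInner_of_isHom_retract (ρ : X →L[ℂ] Y) (π : Y →L[ℂ] X) (hρ : M.IsHom N ρ)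
    (hπ : N.IsHom M π) (hπρ : Function.LeftInverse π ρ)
    (hN : ∀ D' : A →L[ℂ] Y, IsDerivation N D' → IsInner N D') (hD : IsDerivation M D) :
    IsInner M D := by
  have hD_eq : π.comp (ρ.comp D) = D := ext fun a => hπρ (D a)
  exact hD_eq ▸ (hN _ (hD.comp hρ)).comp hπ

end Bimodules

section IdealDual

variable (I : Submodule ℂ A) (hL : ∀ a, ∀ x ∈ I, a * x ∈ I) (hR : ∀ a, ∀ x ∈ I, x * a ∈ I)

noncomputable def dualRestrict : (A →L[ℂ] ℂ) →L[ℂ] (I →L[ℂ] ℂ) :=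
  (compL ℂ I A ℂ).flip I.subtypeL

theorem isHom_dualRestrict :
    (algBimod A).dual.IsHom (idealBimod I hL hR).dual (dualRestrict I) :=
  ⟨fun _ _ => rfl, fun _ _ => rfl⟩

noncomputable def mulRightIdeal (e : I) : A →L[ℂ] I :=
  ((ContinuousLinearMap.mul ℂ A).flip e).codRestrict I fun b => hL b e e.2

theorem norm_mulRightIdeal_le (e : I) : ‖mulRightIdeal I hL e‖ ≤ ‖e‖ :=
  opNorm_le_bound _ (norm_nonneg e) fun b => (norm_mul_le b (e : A)).trans_eq (mul_comm _ _)

theorem exists_isHom_leftInverse_dualRestrict {ι : Type*} (p : Filter ι) [p.NeBot]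
    (e : ι → I) {C : ℝ} (hC : ∀ i, ‖e i‖ ≤ C)
    (hunit : ∀ x : I, Tendsto (fun i => (x : A) * (e i : A)) p (𝓝 x))
    (hcomm : ∀ a, Tendsto (fun i => a * (e i : A) - (e i : A) * a) p (𝓝 0)) :
    ∃ ρ : (I →L[ℂ] ℂ) →L[ℂ] (A →L[ℂ] ℂ), (idealBimod I hL hR).dual.IsHom (algBimod A).dual ρ ∧
      Function.LeftInverse (dualRestrict I) ρ := by
  set U := Ultrafilter.of p
  have hUp : (U : Filter ι) ≤ p := Ultrafilter.of_le p
  have hT (i : ι) : ‖(compL ℂ A I ℂ).flip (mulRightIdeal I hL (e i))‖ ≤ C :=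
    (opNorm_le_bound _ (norm_nonneg (mulRightIdeal I hL (e i)))
      fun f => (f.opNorm_comp_le _).trans_eq (mul_comm _ _)).trans
      ((norm_mulRightIdeal_le I hL (e i)).trans (hC i))
  obtain ⟨ρ, hρ⟩ := exists_tendsto_ultrafilter_apply₂ U _ hT
  refine ⟨ρ, ⟨fun a f => ?_, fun a f => ?_⟩, fun f => ?_⟩
  · ext b
    -- `b * e i * a` and `b * a * e i` differ by `b * (e i * a - a * e i)`, which tends to `0`.
    set u : ι → I := fun i => (idealBimod I hL hR).r a (mulRightIdeal I hL (e i) b) -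
      mulRightIdeal I hL (e i) (b * a)
    have hu : Tendsto u U (𝓝 0) := by
      refine tendsto_subtype_rng.2 ?_
      have h := ((hcomm a).const_mul b).neg.mono_left hUp
      simp only [mul_zero, neg_zero] at h
      refine h.congr fun i => ?_
      change _ = b * e i * a - b * a * e i
      noncomm_ring
    refine tendsto_nhds_unique (hρ _ b) ?_
    have h := (hρ f (b * a)).add ((map_zero f ▸ (f.continuous.tendsto 0).comp hu))
    rw [add_zero] at h
    exact h.congr fun i => (map_add f _ _).symm.trans (congrArg f (add_sub_cancel _ _))
  · ext b
    refine tendsto_nhds_unique (hρ _ b) ((hρ f (a * b)).congr fun i => ?_)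
    exact congrArg f (Subtype.ext (mul_assoc a b _))
  · ext x
    exact tendsto_nhds_unique (hρ f x)
      ((f.continuous.tendsto x).comp (tendsto_subtype_rng.2 ((hunit x).mono_left hUp)))

end IdealDual

theorem stmt_8_general
    {A : Type*} [NormedRing A] [NormedAlgebra ℂ A]
    (hwa : ∀ D : A →L[ℂ] (A →L[ℂ] ℂ),
        IsDerivation (algBimod A).dual D → IsInner (algBimod A).dual D)
    (hqcbai : ∀ (I : Submodule ℂ A), IsClosed (I : Set A) →
        (∀ a : A, ∀ x ∈ I, a * x ∈ I) → (∀ a : A, ∀ x ∈ I, x * a ∈ I) →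
        ∃ (ι : Type) (p : Filter ι) (e : ι → ↥I), p.NeBot ∧
          (∃ C : ℝ, ∀ i, ‖e i‖ ≤ C) ∧
          (∀ x : ↥I, Tendsto (fun i => (e i : A) * (x : A)) p (𝓝 (x : A)) ∧
                     Tendsto (fun i => (x : A) * (e i : A)) p (𝓝 (x : A))) ∧
          (∀ a : A, Tendsto (fun i => a * (e i : A) - (e i : A) * a) p (𝓝 0))) :
    ∀ (I : Submodule ℂ A) (hIc : IsClosed (I : Set A))
      (hL : ∀ a : A, ∀ x ∈ I, a * x ∈ I) (hR : ∀ a : A, ∀ x ∈ I, x * a ∈ I),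
      ∀ D : A →L[ℂ] (↥I →L[ℂ] ℂ),
        IsDerivation (idealBimod I hL hR).dual D → IsInner (idealBimod I hL hR).dual D := by
  intro I hIc hL hR D hD
  obtain ⟨ι, p, e, hp, ⟨C, hC⟩, hunit, hcomm⟩ := hqcbai I hIc hL hR
  obtain ⟨ρ, hρ, hπρ⟩ := exists_isHom_leftInverse_dualRestrict I hL hR p e hC
    (fun x => (hunit x).2) hcomm
  exact isInner_of_isHom_retract ρ _ hρ (isHom_dualRestrict I hL hR) hπρ hwa hD

theorem stmt_8
    {A : Type*} [NormedRing A] [NormedAlgebra ℂ A] [CompleteSpace A]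
    (hwa : ∀ D : A →L[ℂ] (A →L[ℂ] ℂ),
        IsDerivation (algBimod A).dual D → IsInner (algBimod A).dual D)
    (hqcbai : ∀ (I : Submodule ℂ A), IsClosed (I : Set A) →
        (∀ a : A, ∀ x ∈ I, a * x ∈ I) → (∀ a : A, ∀ x ∈ I, x * a ∈ I) →
        ∃ (ι : Type) (p : Filter ι) (e : ι → ↥I), p.NeBot ∧
          (∃ C : ℝ, ∀ i, ‖e i‖ ≤ C) ∧
          (∀ x : ↥I, Tendsto (fun i => (e i : A) * (x : A)) p (𝓝 (x : A)) ∧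
                     Tendsto (fun i => (x : A) * (e i : A)) p (𝓝 (x : A))) ∧
          (∀ a : A, Tendsto (fun i => a * (e i : A) - (e i : A) * a) p (𝓝 0))) :
    ∀ (I : Submodule ℂ A) (hIc : IsClosed (I : Set A))
      (hL : ∀ a : A, ∀ x ∈ I, a * x ∈ I) (hR : ∀ a : A, ∀ x ∈ I, x * a ∈ I),
      ∀ D : A →L[ℂ] (↥I →L[ℂ] ℂ),
        IsDerivation (idealBimod I hL hR).dual D → IsInner (idealBimod I hL hR).dual D :=
  stmt_8_general hwa hqcbai

end Paper
end

section
/- Let A be a Banach algebra, I a closed two-sided ideal of A with A² ⊆ I (where A² is the linear span of products ab). If every continuous derivation from A into I* is inner, then A² is dense in I. -/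
/-!
If `x ∈ I` lies outside the closure of `A²`, Hahn–Banach gives `Φ ∈ A*` vanishing on `A²` with
`Φ x ≠ 0`. With `φ = Φ|_I`, the map `D a = Φ a • φ` is a derivation `A → I*`, since every term
of the derivation identity evaluates `Φ` at a product. If `D` were inner, `D a` would vanish at
every element of `I` commuting with `a`; at `a = x` this gives `Φ x ^ 2 = 0`.
-/

open ContinuousLinearMap Filter Topology

namespace Paper

variable {A : Type*} [NormedRing A] [NormedAlgebra ℂ A]
variable {X : Type*} [NormedAddCommGroup X] [NormedSpace ℂ X]

/-- $A^2$, the linear span of the set of products $\{ab : a, b ∈ A\}$. -/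
noncomputable def sq (A : Type*) [NormedRing A] [NormedAlgebra ℂ A] : Submodule ℂ A :=
  Submodule.span ℂ {x : A | ∃ a b : A, x = a * b}

theorem exists_strongDual_eq_zero_of_notMem_closure {𝕜 E : Type*} [RCLike 𝕜]
    [NormedAddCommGroup E] [NormedSpace 𝕜 E] (S : Submodule 𝕜 E) {x : E}
    (hx : x ∉ closure (S : Set E)) :
    ∃ f : StrongDual 𝕜 E, (∀ y ∈ S, f y = 0) ∧ f x ≠ 0 := by
  set K := S.topologicalClosure
  have : IsClosed (K : Set E) := S.isClosed_topologicalClosure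
  have hmk : K.mkQL x ≠ 0 := by
    rw [Submodule.mkQL_apply, Submodule.mkQ_apply, Ne, Submodule.Quotient.mk_eq_zero]
    exact hx
  obtain ⟨g, hg⟩ := SeparatingDual.exists_ne_zero (R := 𝕜) hmk
  refine ⟨g.comp K.mkQL, fun y hy => ?_, hg⟩
  have hyK : y ∈ K := S.le_topologicalClosure hy
  simp [(Submodule.Quotient.mk_eq_zero K).mpr hyK]

theorem mul_mem_sq (a b : A) : a * b ∈ sq A :=
  Submodule.subset_span ⟨a, b, rfl⟩

@[simp]
theorem Bimod.dual_l_apply (M : Bimod A X) (a : A) (f : X →L[ℂ] ℂ) (x : X) :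
    M.dual.l a f x = f (M.r a x) :=
  rfl

@[simp]
theorem Bimod.dual_r_apply (M : Bimod A X) (a : A) (f : X →L[ℂ] ℂ) (x : X) :
    M.dual.r a f x = f (M.l a x) :=
  rfl

@[simp]
theorem idealBimod_l_coe (I : Submodule ℂ A) (hL : ∀ a, ∀ x ∈ I, a * x ∈ I)
    (hR : ∀ a, ∀ x ∈ I, x * a ∈ I) (a : A) (y : I) :
    ((idealBimod I hL hR).l a y : A) = a * y :=
  rfl

@[simp]
theorem idealBimod_r_coe (I : Submodule ℂ A) (hL : ∀ a, ∀ x ∈ I, a * x ∈ I)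
    (hR : ∀ a, ∀ x ∈ I, x * a ∈ I) (a : A) (y : I) :
    ((idealBimod I hL hR).r a y : A) = y * a :=
  rfl

theorem isDerivation_dual_smulRight (M : Bimod A X) {Φ : A →L[ℂ] ℂ} {φ : X →L[ℂ] ℂ}
    (hΦ : ∀ a b, Φ (a * b) = 0) (hl : ∀ a x, φ (M.l a x) = 0) (hr : ∀ a x, φ (M.r a x) = 0) :
    IsDerivation M.dual (Φ.smulRight φ) := by
  intro a b
  ext x
  simp [hΦ, hl, hr]

theorem IsInner.apply_mul_apply_eq_zero {M : Bimod A X} {Φ : A →L[ℂ] ℂ} {φ : X →L[ℂ] ℂ}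
    (hD : IsInner M.dual (Φ.smulRight φ)) {a : A} {x : X} (hax : M.l a x = M.r a x) :
    Φ a * φ x = 0 := by
  obtain ⟨f, hf⟩ := hD
  simpa [hax] using congr($(hf a) x)

theorem stmt_9_general
    {A : Type*} [NormedRing A] [NormedAlgebra ℂ A]
    (I : Submodule ℂ A) (hIc : IsClosed (I : Set A))
    (hL : ∀ a : A, ∀ x ∈ I, a * x ∈ I) (hR : ∀ a : A, ∀ x ∈ I, x * a ∈ I)
    (hsq : sq A ≤ I)
    (h : ∀ D : A →L[ℂ] (↥I →L[ℂ] ℂ),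
        IsDerivation (idealBimod I hL hR).dual D → IsInner (idealBimod I hL hR).dual D) :
    closure (sq A : Set A) = (I : Set A) := by
  refine (closure_minimal hsq hIc).antisymm fun x hxI => by_contra fun hx => ?_
  obtain ⟨Φ, hΦsq, hΦx⟩ := exists_strongDual_eq_zero_of_notMem_closure (sq A) hx
  have hΦmul (a b : A) : Φ (a * b) = 0 := hΦsq _ (mul_mem_sq a b)
  have hinner : IsInner (idealBimod I hL hR).dual (Φ.smulRight (Φ.comp I.subtypeL)) :=
    h _ (isDerivation_dual_smulRight _ hΦmul (fun a y => hΦmul a y) (fun a y => hΦmul y a))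
  have hΦx2 : Φ x * Φ x = 0 :=
    hinner.apply_mul_apply_eq_zero (a := x) (x := ⟨x, hxI⟩) rfl
  exact hΦx (mul_self_eq_zero.mp hΦx2)

theorem stmt_9
    {A : Type*} [NormedRing A] [NormedAlgebra ℂ A] [CompleteSpace A]
    (I : Submodule ℂ A) (hIc : IsClosed (I : Set A))
    (hL : ∀ a : A, ∀ x ∈ I, a * x ∈ I) (hR : ∀ a : A, ∀ x ∈ I, x * a ∈ I)
    (hsq : sq A ≤ I)
    (h : ∀ D : A →L[ℂ] (↥I →L[ℂ] ℂ),
        IsDerivation (idealBimod I hL hR).dual D → IsInner (idealBimod I hL hR).dual D) :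
    closure (sq A : Set A) = (I : Set A) :=
  stmt_9_general I hIc hL hR hsq h

end Paper
end
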